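/- For every integer t ≥ 2, the following formal power series identity holds: Σ_{n∈ℤ} (-1)^n q^{(2t-1)n(3(2t-1)n-1)/2} + Σ_{r=1}^{t-1} (-1)^r Σ_{n∈ℤ} (-1)^n q^{r(3r-1)/2 + (6r-1)(2t-1)n/2 + 3(2t-1)^2 n^2/2} + Σ_{r=1}^{t-1} (-1)^r Σ_{n∈ℤ} (-1)^n q^{r(3r+1)/2 + (6r+1)(2t-1)n/2 + 3(2t-1)^2 n^2/2} = Π_{n≥1} (1 - q^n). -/

import Mathlib

open PowerSeries

/-- The infinite product `∏_{n ≥ 1} f n` of power series, where the `n`-th factor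
is `1 + O(q^n)`: its `N`-th coefficient is the `N`-th coefficient of any
sufficiently long partial product. -/
noncomputable def seriesProd (f : ℕ → PowerSeries ℤ) : PowerSeries ℤ :=
  PowerSeries.mk fun N => coeff N (∏ n ∈ Finset.range (N + 1), f n)

/-- A formal sum `∑_{n ∈ ℤ} c n * q^(e n)`, where for each `N` only finitely many
`n ∈ ℤ` satisfy `e n = N`: its `N`-th coefficient is `∑_{n : e n = N} c n`. -/
noncomputable def seriesSum (c : ℤ → ℤ) (e : ℤ → ℕ) : PowerSeries ℤ :=
  PowerSeries.mk fun N => ∑' n : ℤ, if e n = N then c n else 0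

/-!
With `u = 2t - 1`, the exponents of the three families are the pentagonal numbers
`P(m) = m(3m-1)/2` at `m = un`, `m = un + r` and `m = -(un + r)`, and since `u` is odd the sign
`(-1)^r (-1)^n` is `(-1)^m`. So the families are the parts of Euler's pentagonal series
`∑_{m ∈ ℤ} (-1)^m q^{P(m)}` over the residue classes `0, r, -r` modulo `u`. As `0, ±1, …, ±(t-1)`
is a complete system of residues modulo `u`, they add up to the whole pentagonal series, which is
the Euler product by the pentagonal number theorem.
-/

open Finset Function

section SeriesSum

variable {e : ℤ → ℕ}

theorem coeff_seriesSum (he : ∀ N, (e ⁻¹' {N}).Finite) (c : ℤ → ℤ) (N : ℕ) :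
    coeff N (seriesSum c e) = ∑ n ∈ (he N).toFinset, c n := by
  rw [seriesSum, coeff_mk,
    tsum_eq_sum (s := (he N).toFinset) fun n hn => if_neg (by simpa using hn)]
  exact sum_congr rfl fun n hn => if_pos (by simpa using hn)

theorem seriesSum_add (he : ∀ N, (e ⁻¹' {N}).Finite) (c d : ℤ → ℤ) :
    seriesSum (c + d) e = seriesSum c e + seriesSum d e := by
  ext N
  simp [coeff_seriesSum he, sum_add_distrib]

theorem seriesSum_sum {ι : Type*} (he : ∀ N, (e ⁻¹' {N}).Finite) (s : Finset ι)
    (c : ι → ℤ → ℤ) : seriesSum (∑ i ∈ s, c i) e = ∑ i ∈ s, seriesSum (c i) e := by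
  ext N
  simp [coeff_seriesSum he, sum_comm (s := s)]

theorem C_mul_seriesSum (he : ∀ N, (e ⁻¹' {N}).Finite) (a : ℤ) (c : ℤ → ℤ) :
    C a * seriesSum c e = seriesSum (fun n => a * c n) e := by
  ext N
  rw [coeff_C_mul, coeff_seriesSum he, coeff_seriesSum he, mul_sum]

theorem seriesSum_comp_of_injective {g : ℤ → ℤ} (hg : Injective g) (c : ℤ → ℤ) :
    seriesSum (c ∘ g) (e ∘ g) = seriesSum ((Set.range g).indicator c) e := by
  ext N
  simp only [seriesSum, coeff_mk]
  refine Eq.trans ?_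
    (hg.tsum_eq (f := fun m => if e m = N then (Set.range g).indicator c m else 0) ?_)
  · simp
  · intro m hm
    by_contra h
    exact hm (by simp [h])

end SeriesSum

theorem Function.Injective.finite_preimage_singleton {α β : Type*} {e : α → β} (he : Injective e)
    (N : β) : (e ⁻¹' {N}).Finite :=
  (Set.finite_singleton N).preimage he.injOn

theorem dvd_prod_sub_one {ι R : Type*} [CommRing R] {a : R} {s : Finset ι} {f : ι → R}
    (h : ∀ i ∈ s, a ∣ f i - 1) : a ∣ ∏ i ∈ s, f i - 1 := by
  refine prod_induction f (fun x => a ∣ x - 1) (fun x y hx hy => ?_) (by simp) h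
  rw [show x * y - 1 = (x - 1) * y + (y - 1) by ring]
  exact dvd_add (dvd_mul_of_dvd_left hx y) hy

theorem PowerSeries.coeff_mul_of_X_pow_dvd_sub_one {R : Type*} [CommRing R] {p q : R⟦X⟧}
    {N : ℕ} (h : X ^ (N + 1) ∣ q - 1) : coeff N (p * q) = coeff N p := by
  obtain ⟨r, hr⟩ := h
  rw [show q = 1 + X ^ (N + 1) * r by rw [← hr]; ring, mul_add, mul_one, map_add,
    mul_left_comm, coeff_X_pow_mul', if_neg (by omega), add_zero]

theorem seriesProd_one_sub_X_pow :
    seriesProd (fun n => 1 - X ^ (n + 1)) = pentagonalSeries ℤ := by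
  ext N
  obtain ⟨M, hM⟩ := Filter.eventually_atTop.1
    (Filter.tendsto_finset_range.eventually (coeff_prod_one_sub_X_pow_eventually_eq ℤ N))
  rw [seriesProd, coeff_mk, ← hM (max M (N + 1)) (le_max_left _ _),
    ← prod_range_mul_prod_Ico _ (le_max_right M (N + 1)), coeff_mul_of_X_pow_dvd_sub_one]
  refine dvd_prod_sub_one fun n hn => ?_
  rw [sub_sub_cancel_left, dvd_neg]
  exact pow_dvd_pow X (by simp at hn; omega)

theorem pentagonalSeries_eq_seriesSum :
    pentagonalSeries ℤ = seriesSum (fun m => (m.negOnePow : ℤ)) pentagonal := by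
  ext N
  rw [seriesSum, coeff_mk]
  by_cases hN : N ∈ Set.range pentagonal
  · obtain ⟨k, rfl⟩ := hN
    rw [coeff_pentagonalSeries_pentagonal,
      tsum_eq_single k fun m hm => if_neg (pentagonal_injective.ne hm), if_pos rfl]
    rfl
  · have : ∀ m, pentagonal m ≠ N := fun m h => hN ⟨m, h⟩
    simp [coeff_pentagonalSeries_eq_zero ℤ hN, this]

theorem pentagonal_mul (u n : ℤ) : pentagonal (u * n) = (u * n * (3 * u * n - 1) / 2).toNat := by
  rw [pentagonal_def, mul_assoc 3]

theorem pentagonal_mul_add (u n r : ℤ) : pentagonal (u * n + r) =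
    ((r * (3 * r - 1) + (6 * r - 1) * u * n + 3 * u ^ 2 * n ^ 2) / 2).toNat := by
  rw [pentagonal_def]
  ring_nf

theorem pentagonal_neg_mul_add (u n r : ℤ) : pentagonal (-(u * n + r)) =
    ((r * (3 * r + 1) + (6 * r + 1) * u * n + 3 * u ^ 2 * n ^ 2) / 2).toNat := by
  rw [pentagonal_neg]
  ring_nf

theorem Int.negOnePow_mul_of_odd {u : ℤ} (hu : Odd u) (n : ℤ) :
    (u * n).negOnePow = n.negOnePow := by
  rw [Int.negOnePow_eq_iff, ← sub_one_mul]
  exact (hu.sub_odd odd_one).mul_right n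

theorem neg_one_pow_mul_seriesSum_pentagonal_comp {g : ℤ → ℤ} (hg : Injective g) (r : ℕ)
    (hgr : ∀ n, (g n).negOnePow = (r : ℤ).negOnePow * n.negOnePow) :
    (-1 : ℤ⟦X⟧) ^ r * seriesSum (fun n => (n.negOnePow : ℤ)) (fun n => pentagonal (g n))
      = seriesSum ((Set.range g).indicator fun m => (m.negOnePow : ℤ)) pentagonal := by
  rw [show (-1 : ℤ⟦X⟧) ^ r = C ((-1) ^ r) by simp,
    C_mul_seriesSum (e := fun n => pentagonal (g n))
      (pentagonal_injective.comp hg).finite_preimage_singleton,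
    ← seriesSum_comp_of_injective hg]
  congr 1
  funext n
  simp [hgr, Int.coe_negOnePow_natCast]

theorem injective_mul_add {u : ℤ} (hu : u ≠ 0) (r : ℤ) : Injective fun n => u * n + r :=
  (add_left_injective r).comp (mul_right_injective₀ hu)

theorem neg_one_pow_mul_seriesSum_pentagonal_mul_add {u : ℤ} (hu : Odd u) (r : ℕ) :
    (-1 : ℤ⟦X⟧) ^ r * seriesSum (fun n => (n.negOnePow : ℤ)) (fun n => pentagonal (u * n + r))
      = seriesSum ((Set.range fun n => u * n + r).indicator fun m => (m.negOnePow : ℤ))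
          pentagonal :=
  neg_one_pow_mul_seriesSum_pentagonal_comp (injective_mul_add (by rintro rfl; simp at hu) _) r
    fun n => by rw [Int.negOnePow_add, Int.negOnePow_mul_of_odd hu, mul_comm]

theorem neg_one_pow_mul_seriesSum_pentagonal_neg_mul_add {u : ℤ} (hu : Odd u) (r : ℕ) :
    (-1 : ℤ⟦X⟧) ^ r * seriesSum (fun n => (n.negOnePow : ℤ)) (fun n => pentagonal (-(u * n + r)))
      = seriesSum ((Set.range fun n => -(u * n + r)).indicator fun m => (m.negOnePow : ℤ))
          pentagonal :=
  neg_one_pow_mul_seriesSum_pentagonal_comp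
    (neg_injective.comp (injective_mul_add (by rintro rfl; simp at hu) _)) r fun n => by
      rw [comp_apply, Int.negOnePow_neg, Int.negOnePow_add, Int.negOnePow_mul_of_odd hu, mul_comm]

theorem mem_range_mul_add_iff {u r m : ℤ} : m ∈ Set.range (fun n => u * n + r) ↔ u ∣ m - r :=
  ⟨fun ⟨n, hn⟩ => ⟨n, by linarith⟩, fun ⟨n, hn⟩ => ⟨n, by linarith⟩⟩

theorem mem_range_neg_mul_add_iff {u r m : ℤ} :
    m ∈ Set.range (fun n => -(u * n + r)) ↔ u ∣ m + r :=
  ⟨fun ⟨n, hn⟩ => ⟨-n, by linarith⟩, fun ⟨n, hn⟩ => ⟨-n, by linarith⟩⟩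

theorem exists_balanced_residue (t : ℕ) (ht : 0 < t) (m : ℤ) :
    ∃ s : ℤ, -(t - 1) ≤ s ∧ s ≤ t - 1 ∧ 2 * (t : ℤ) - 1 ∣ m - s := by
  have hu : (0 : ℤ) < 2 * t - 1 := by omega
  refine ⟨(m + (t - 1)) % (2 * t - 1) - (t - 1), ?_, ?_, ?_⟩
  · linarith [Int.emod_nonneg (m + (t - 1)) hu.ne']
  · linarith [Int.emod_lt_of_pos (m + (t - 1)) hu]
  · rw [show m - ((m + (t - 1)) % (2 * t - 1) - (t - 1))
        = m + (t - 1) - (m + (t - 1)) % (2 * t - 1) by ring]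
    exact (Int.mod_modEq _ _).dvd

theorem dvd_sub_iff_eq_of_abs_sub_lt {u m s x : ℤ} (hms : u ∣ m - s) (hsx : |s - x| < u) :
    u ∣ m - x ↔ x = s := by
  refine ⟨fun h => ?_, fun h => h ▸ hms⟩
  have hdvd : u ∣ s - x := by
    rw [← sub_sub_sub_cancel_left x s m]
    exact dvd_sub h hms
  linarith [Int.eq_zero_of_abs_lt_dvd hdvd hsx]

theorem sum_Icc_ite_natCast_eq {M : Type*} [AddCommMonoid M] (k : ℕ) {s : ℤ} (hs : s ≤ k)
    (a : M) : ∑ r ∈ Icc 1 k, (if (r : ℤ) = s then a else 0) = if 0 < s then a else 0 := by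
  split_ifs with h
  · lift s to ℕ using h.le
    simp only [Nat.cast_inj, sum_ite_eq', mem_Icc]
    rw [if_pos (by omega)]
  · exact sum_eq_zero fun r hr => if_neg (by simp at hr; omega)

theorem indicator_add_sum_indicator_residues (t : ℕ) (f : ℤ → ℤ) :
    (Set.range fun n => (2 * t - 1 : ℤ) * n).indicator f
      + ∑ r ∈ Icc 1 (t - 1), (Set.range fun n => (2 * t - 1 : ℤ) * n + r).indicator f
      + ∑ r ∈ Icc 1 (t - 1), (Set.range fun n => -((2 * t - 1 : ℤ) * n + r)).indicator f
      = f := by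
  classical
  funext m
  simp only [Pi.add_apply, Finset.sum_apply, Set.indicator_apply]
  obtain rfl | ht := t.eq_zero_or_pos
  · have hm : m ∈ Set.range fun n : ℤ => (2 * ((0 : ℕ) : ℤ) - 1) * n := ⟨-m, by simp⟩
    rw [if_pos hm]
    simp
  obtain ⟨s, hs₁, hs₂, hms⟩ := exists_balanced_residue t ht m
  have key : ∀ x : ℤ, -(t - 1) ≤ x → x ≤ t - 1 → (2 * (t : ℤ) - 1 ∣ m - x ↔ x = s) :=
    fun x hx₁ hx₂ => dvd_sub_iff_eq_of_abs_sub_lt hms (abs_lt.2 ⟨by omega, by omega⟩)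
  have h₀ : (m ∈ Set.range fun n => (2 * t - 1 : ℤ) * n) ↔ 0 = s := by
    simpa using mem_range_mul_add_iff.trans (key 0 (by omega) (by omega))
  have hpos : ∀ r ∈ Icc 1 (t - 1),
      (m ∈ Set.range fun n => (2 * t - 1 : ℤ) * n + r) ↔ (r : ℤ) = s := fun r hr => by
    rw [mem_Icc] at hr
    rw [mem_range_mul_add_iff, key r (by omega) (by omega)]
  have hneg : ∀ r ∈ Icc 1 (t - 1),
      (m ∈ Set.range fun n => -((2 * t - 1 : ℤ) * n + r)) ↔ (r : ℤ) = -s := fun r hr => by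
    rw [mem_Icc] at hr
    rw [mem_range_neg_mul_add_iff, ← sub_neg_eq_add, key _ (by omega) (by omega),
      neg_eq_iff_eq_neg]
  rw [if_congr h₀ rfl rfl, sum_congr rfl fun r hr => if_congr (hpos r hr) rfl rfl,
    sum_congr rfl fun r hr => if_congr (hneg r hr) rfl rfl,
    sum_Icc_ite_natCast_eq _ (by omega), sum_Icc_ite_natCast_eq _ (by omega)]
  split_ifs <;> omega

theorem A_t_eq_euler_product_general (t : ℕ) :
    (seriesSum (fun n => (n.negOnePow : ℤ))
        (fun n => ((2 * (t : ℤ) - 1) * n * (3 * (2 * (t : ℤ) - 1) * n - 1) / 2).toNat))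
      + ∑ r ∈ Finset.Icc 1 (t - 1), (-1 : PowerSeries ℤ) ^ r *
          seriesSum (fun n => (n.negOnePow : ℤ))
            (fun n => (((r : ℤ) * (3 * r - 1) + (6 * (r : ℤ) - 1) * (2 * t - 1) * n
                + 3 * (2 * (t : ℤ) - 1) ^ 2 * n ^ 2) / 2).toNat)
      + ∑ r ∈ Finset.Icc 1 (t - 1), (-1 : PowerSeries ℤ) ^ r *
          seriesSum (fun n => (n.negOnePow : ℤ))
            (fun n => (((r : ℤ) * (3 * r + 1) + (6 * (r : ℤ) + 1) * (2 * t - 1) * n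
                + 3 * (2 * (t : ℤ) - 1) ^ 2 * n ^ 2) / 2).toNat)
      = seriesProd (fun n => 1 - X ^ (n + 1)) := by
  have hu : Odd (2 * (t : ℤ) - 1) := ⟨t - 1, by ring⟩
  have hP := pentagonal_injective.finite_preimage_singleton
  have h₀ := neg_one_pow_mul_seriesSum_pentagonal_mul_add hu 0
  simp only [pow_zero, one_mul, Nat.cast_zero, add_zero] at h₀
  simp_rw [← pentagonal_mul, ← pentagonal_mul_add, ← pentagonal_neg_mul_add, h₀,
    neg_one_pow_mul_seriesSum_pentagonal_mul_add hu,
    neg_one_pow_mul_seriesSum_pentagonal_neg_mul_add hu, ← seriesSum_sum hP, ← seriesSum_add hP,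
    indicator_add_sum_indicator_residues, seriesProd_one_sub_X_pow, pentagonalSeries_eq_seriesSum]

/-- For every integer `t ≥ 2`, the series `A_t(q)`, namely
`Σ_{n∈ℤ} (-1)^n q^{(2t-1)n(3(2t-1)n-1)/2}
 + Σ_{r=1}^{t-1} (-1)^r Σ_{n∈ℤ} (-1)^n q^{r(3r-1)/2 + (6r-1)(2t-1)n/2 + 3(2t-1)²n²/2}
 + Σ_{r=1}^{t-1} (-1)^r Σ_{n∈ℤ} (-1)^n q^{r(3r+1)/2 + (6r+1)(2t-1)n/2 + 3(2t-1)²n²/2}`,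
equals `∏_{n ≥ 1} (1 - q^n)` as a formal power series. -/
theorem A_t_eq_euler_product (t : ℕ) (ht : 2 ≤ t) :
    (seriesSum (fun n => (n.negOnePow : ℤ))
        (fun n => ((2 * (t : ℤ) - 1) * n * (3 * (2 * (t : ℤ) - 1) * n - 1) / 2).toNat))
      + ∑ r ∈ Finset.Icc 1 (t - 1), (-1 : PowerSeries ℤ) ^ r *
          seriesSum (fun n => (n.negOnePow : ℤ))
            (fun n => (((r : ℤ) * (3 * r - 1) + (6 * (r : ℤ) - 1) * (2 * t - 1) * n
                + 3 * (2 * (t : ℤ) - 1) ^ 2 * n ^ 2) / 2).toNat)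
      + ∑ r ∈ Finset.Icc 1 (t - 1), (-1 : PowerSeries ℤ) ^ r *
          seriesSum (fun n => (n.negOnePow : ℤ))
            (fun n => (((r : ℤ) * (3 * r + 1) + (6 * (r : ℤ) + 1) * (2 * t - 1) * n
                + 3 * (2 * (t : ℤ) - 1) ^ 2 * n ^ 2) / 2).toNat)
      = seriesProd (fun n => 1 - X ^ (n + 1)) :=
  A_t_eq_euler_product_general t
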